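/- Let T = ℕ and let X and Y be processes on Ω with values in (E, ℰ). Let S be a random time which is a stopping time of the natural filtration F^X (equivalently, by the discrete stopping-time equivalence, a stopping time of F^{X^S}), and suppose X^S = Y^S pointwise. Then S is also a stopping time of F^Y, and F^X_S = F^Y_S. -/

import Mathlib

/-!
On `{n ≤ S}` the processes `X` and `X^S` agree up to time `n`, so `F^X_n` and `F^{X^S}_n` have
the same trace there. By induction on `n` this makes `S` a stopping time of `F^{X^S}`, and
decomposing along the events `{S = k}`, `k ∈ ℕ ∪ {∞}`, gives `F^X_S ⊆ F^{X^S}_S`. Conversely,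
`X^S_n` is built from `X_0, …, X_n` and the events `{S ≤ k}`, `k < n`, so `F^{X^S}_n ⊆ F^X_n` as
soon as these events lie in `F^X`. Since `X^S = Y^S`, everything passes from `X` to `Y` through
the common stopped process.
-/

open MeasureTheory Set

variable {Ω E : Type*}

/-- The natural filtration of a discrete-time process `X : ℕ → Ω → E`. -/
def natFilt [mE : MeasurableSpace E] (X : ℕ → Ω → E) (n : ℕ) : MeasurableSpace Ω :=
  ⨆ m, ⨆ _ : m ≤ n, mE.comap (X m)

/-- The process `X` stopped at the random time `S : Ω → ℕ ∪ {∞}`. -/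
def stopped (X : ℕ → Ω → E) (S : Ω → ℕ∞) (n : ℕ) (ω : Ω) : E :=
  X (min n (WithTop.untopD n (S ω))) ω

section NaturalFiltration

variable [MeasurableSpace E]

lemma measurable_natFilt (X : ℕ → Ω → E) {k n : ℕ} (h : k ≤ n) :
    Measurable[natFilt X n] (X k) :=
  Measurable.of_comap_le (le_iSup₂_of_le k h le_rfl)

lemma natFilt_le {m : MeasurableSpace Ω} {X : ℕ → Ω → E} {n : ℕ}
    (h : ∀ k ≤ n, Measurable[m] (X k)) : natFilt X n ≤ m :=
  iSup₂_le fun k hk => (h k hk).comap_le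

lemma natFilt_mono (X : ℕ → Ω → E) : Monotone (natFilt X) := fun _ _ hmn =>
  natFilt_le fun _ hk => measurable_natFilt X (hk.trans hmn)

/-- With ambient σ-algebra `F^X_∞`, so that `IsStoppingTime.measurableSpace` is exactly `F^X_S`. -/
def natFiltration (X : ℕ → Ω → E) : Filtration ℕ (⨆ n, natFilt X n) where
  seq := natFilt X
  mono' := natFilt_mono X
  le' := le_iSup (natFilt X)

lemma measurableSet_inter_of_comap_subtype_le {m m' : MeasurableSpace Ω} {C A : Set Ω}
    (h : m.comap ((↑) : C → Ω) ≤ m'.comap (↑)) (hC : MeasurableSet[m'] C)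
    (hA : MeasurableSet[m] A) : MeasurableSet[m'] (A ∩ C) := by
  obtain ⟨B, hB, hBA⟩ := h _ ⟨A, hA, rfl⟩
  rw [Subtype.preimage_coe_eq_preimage_coe_iff] at hBA
  rw [inter_comm, ← hBA, inter_comm]
  exact hB.inter hC

lemma comap_subtype_natFilt_le {X X' : ℕ → Ω → E} {C : Set Ω} {n : ℕ}
    (h : ∀ k ≤ n, EqOn (X k) (X' k) C) :
    (natFilt X n).comap ((↑) : C → Ω) ≤ (natFilt X' n).comap (↑) := by
  refine MeasurableSpace.comap_le_iff_le_map.mpr (natFilt_le fun k hk B hB => ?_)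
  refine ⟨X' k ⁻¹' B, measurable_natFilt X' hk hB, ?_⟩
  ext ⟨ω, hω⟩
  simp [h k hk hω]

lemma measurableSet_natFilt_inter_of_eqOn {X X' : ℕ → Ω → E} {C A : Set Ω} {n : ℕ}
    (h : ∀ k ≤ n, EqOn (X k) (X' k) C) (hC : MeasurableSet[natFilt X' n] C)
    (hA : MeasurableSet[natFilt X n] A) : MeasurableSet[natFilt X' n] (A ∩ C) :=
  measurableSet_inter_of_comap_subtype_le (comap_subtype_natFilt_le h) hC hA

lemma measurableSet_iSup_natFilt_inter_of_eqOn {X X' : ℕ → Ω → E} {C A : Set Ω}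
    (h : ∀ k, EqOn (X k) (X' k) C) (hC : MeasurableSet[⨆ n, natFilt X' n] C)
    (hA : MeasurableSet[⨆ n, natFilt X n] A) : MeasurableSet[⨆ n, natFilt X' n] (A ∩ C) := by
  refine measurableSet_inter_of_comap_subtype_le ?_ hC hA
  simp only [MeasurableSpace.comap_iSup]
  exact iSup_mono fun n => comap_subtype_natFilt_le fun k _ => h k

end NaturalFiltration

section StoppedProcess

variable {X : ℕ → Ω → E} {S : Ω → ℕ∞}

lemma stopped_eq_stoppedProcess (X : ℕ → Ω → E) (S : Ω → ℕ∞) :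
    stopped X S = stoppedProcess X S := by
  ext n ω
  cases h : S ω with
  | top =>
    simp only [stopped, stoppedProcess, h]
    show X (min n n) ω = _
    rw [min_self]
    rfl
  | coe k => simp only [stopped, stoppedProcess, h]; rfl

lemma stoppedProcess_succ_apply (n : ℕ) (ω : Ω) :
    stoppedProcess X S (n + 1) ω =
      if S ω ≤ n then stoppedProcess X S n ω else X (n + 1) ω := by
  split_ifs with h
  · rw [stoppedProcess_eq_of_ge h,
      stoppedProcess_eq_of_ge (h.trans (WithTop.coe_le_coe.mpr n.le_succ))]
  · exact stoppedProcess_eq_of_le (Order.add_one_le_of_lt (not_le.mp h))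

lemma eqOn_stoppedProcess {j k : ℕ} (h : j ≤ k) :
    EqOn (X j) (stoppedProcess X S j) {ω | k ≤ S ω} := fun _ hω =>
  (stoppedProcess_eq_of_le ((WithTop.coe_le_coe.mpr h).trans hω)).symm

variable [MeasurableSpace E]

lemma measurable_stoppedProcess_of_le {m : MeasurableSpace Ω} {n : ℕ}
    (hX : ∀ k ≤ n, Measurable[m] (X k)) (hS : ∀ k < n, MeasurableSet[m] {ω | S ω ≤ k}) :
    Measurable[m] (stoppedProcess X S n) := by
  induction n with
  | zero =>
    have : stoppedProcess X S 0 = X 0 := funext fun _ => stoppedProcess_eq_of_le zero_le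
    exact this ▸ hX 0 le_rfl
  | succ n ih =>
    have : stoppedProcess X S (n + 1) = fun ω =>
        if S ω ≤ n then stoppedProcess X S n ω else X (n + 1) ω :=
      funext (stoppedProcess_succ_apply n)
    rw [this]
    exact Measurable.ite (hS n n.lt_succ_self)
      (ih (fun k hk => hX k (hk.trans n.le_succ)) fun k hk => hS k (hk.trans n.lt_succ_self))
      (hX (n + 1) le_rfl)

lemma natFilt_stoppedProcess_le {n : ℕ}
    (hS : ∀ k < n, MeasurableSet[natFilt X k] {ω | S ω ≤ k}) :
    natFilt (stoppedProcess X S) n ≤ natFilt X n :=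
  natFilt_le fun _ hk => measurable_stoppedProcess_of_le
    (fun _ hj => measurable_natFilt X (hj.trans hk))
    fun j hj => natFilt_mono X (hj.le.trans hk) _ (hS j (hj.trans_le hk))

lemma measurableSet_natFilt_stoppedProcess_inter_ge {A : Set Ω} {n : ℕ}
    (hC : MeasurableSet[natFilt (stoppedProcess X S) n] {ω | n ≤ S ω})
    (hA : MeasurableSet[natFilt X n] A) :
    MeasurableSet[natFilt (stoppedProcess X S) n] (A ∩ {ω | n ≤ S ω}) :=
  measurableSet_natFilt_inter_of_eqOn (fun _ hk => eqOn_stoppedProcess hk) hC hA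

end StoppedProcess

namespace MeasureTheory.IsStoppingTime

lemma measurableSpace_le_of_filtration_le {ι : Type*} [Preorder ι] {m m' : MeasurableSpace Ω}
    {f : Filtration ι m} {g : Filtration ι m'} {τ : Ω → WithTop ι} (hf : IsStoppingTime f τ)
    (hg : IsStoppingTime g τ) (hfg : ∀ i, f i ≤ g i) :
    hf.measurableSpace ≤ hg.measurableSpace :=
  fun _ hA => ⟨iSup_mono hfg _ hA.1, fun i => hfg i _ (hA.2 i)⟩

variable [MeasurableSpace E] {X : ℕ → Ω → E} {S : Ω → ℕ∞}

lemma of_natFiltration_stoppedProcess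
    (hS : IsStoppingTime (natFiltration (stoppedProcess X S)) S) :
    IsStoppingTime (natFiltration X) S := by
  intro n
  induction n using Nat.strong_induction_on with
  | _ n ih => exact natFilt_stoppedProcess_le ih _ (hS n)

lemma natFiltration_stoppedProcess (hS : IsStoppingTime (natFiltration X) S) :
    IsStoppingTime (natFiltration (stoppedProcess X S)) S := by
  intro n
  induction n with
  | zero =>
    have h := measurableSet_natFilt_stoppedProcess_inter_ge (X := X) (S := S) (n := 0)
      (by simp) (hS 0)
    rwa [show {ω | ((0 : ℕ) : ℕ∞) ≤ S ω} = univ by ext; simp, inter_univ] at h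
  | succ n ih =>
    have hge : {ω | ((n + 1 : ℕ) : ℕ∞) ≤ S ω} = {ω | S ω ≤ n}ᶜ := by
      ext ω
      simp [ENat.add_one_le_iff (ENat.natCast_ne_top n)]
    have h := measurableSet_natFilt_stoppedProcess_inter_ge (X := X) (S := S) (n := n + 1)
      (hge ▸ (natFilt_mono _ n.le_succ _ ih).compl) (hS (n + 1))
    have hsplit : {ω | S ω ≤ ((n + 1 : ℕ) : ℕ∞)} =
        {ω | S ω ≤ n} ∪ ({ω | S ω ≤ ((n + 1 : ℕ) : ℕ∞)} ∩ {ω | ((n + 1 : ℕ) : ℕ∞) ≤ S ω}) := by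
      rw [hge, union_inter_distrib_left, union_compl_self, inter_univ, union_eq_right.mpr]
      exact ofPred_subset_ofPred.mpr fun ω hω => hω.trans (by exact_mod_cast n.le_succ)
    exact hsplit ▸ (natFilt_mono _ n.le_succ _ ih).union h

lemma measurableSpace_le_natFiltration_stoppedProcess (hS : IsStoppingTime (natFiltration X) S) :
    hS.measurableSpace ≤ hS.natFiltration_stoppedProcess.measurableSpace := by
  intro A hA
  have hS' := hS.natFiltration_stoppedProcess
  have hA_eq : A = ⋃ k : ℕ∞, A ∩ {ω | S ω = k} := by ext; simp
  rw [hA_eq]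
  refine .iUnion fun k => ?_
  induction k using ENat.recTopCoe with
  | top =>
    refine ⟨measurableSet_iSup_natFilt_inter_of_eqOn (fun k ω hω => ?_)
      hS'.measurableSet_eq_top' hA.1, fun i => ?_⟩
    · exact (stoppedProcess_eq_of_le (le_of_le_of_eq le_top hω.symm)).symm
    · have h_empty : A ∩ {ω | S ω = ⊤} ∩ {ω | S ω ≤ i} = ∅ :=
        eq_empty_of_forall_notMem fun ω ⟨⟨_, hT⟩, hle⟩ => WithTop.not_top_le_coe i (hT ▸ hle)
      exact h_empty ▸ @MeasurableSet.empty _ (natFilt (stoppedProcess X S) i)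
  | coe k =>
    have hk := (hS.measurableSet_inter_eq_iff A k).mp
      (hA.inter (hS.measurableSet_eq_of_countable' k))
    have h := measurableSet_natFilt_stoppedProcess_inter_ge
      (hS'.measurableSet_ge_of_countable k) hk
    rw [inter_eq_left.mpr fun ω hω => hω.2.ge] at h
    exact (hS'.measurableSet_inter_eq_iff A k).mpr h

lemma measurableSpace_le_of_stoppedProcess_eq {Y : ℕ → Ω → E}
    (hX : IsStoppingTime (natFiltration X) S) (hY : IsStoppingTime (natFiltration Y) S)
    (h : stoppedProcess X S = stoppedProcess Y S) :
    hX.measurableSpace ≤ hY.measurableSpace := by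
  refine hX.measurableSpace_le_natFiltration_stoppedProcess.trans
    (measurableSpace_le_of_filtration_le _ hY fun n => ?_)
  change natFilt (stoppedProcess X S) n ≤ natFilt Y n
  rw [h]
  exact natFilt_stoppedProcess_le fun k _ => hY k

end MeasureTheory.IsStoppingTime

/-- **Observational consistency, discrete time.** If `S` is a stopping time of the natural
filtration of `X` and the stopped processes `X^S` and `Y^S` agree pointwise, then `S` is
also a stopping time of the natural filtration of `Y`, and `F^X_S = F^Y_S`. -/
theorem stmt_4 [MeasurableSpace E] (X Y : ℕ → Ω → E) (S : Ω → ℕ∞)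
    (hS : ∀ n : ℕ, MeasurableSet[natFilt X n] {ω | S ω ≤ (n : ℕ∞)})
    (hXY : ∀ (n : ℕ) (ω : Ω), stopped X S n ω = stopped Y S n ω) :
    (∀ n : ℕ, MeasurableSet[natFilt Y n] {ω | S ω ≤ (n : ℕ∞)}) ∧
      (∀ A : Set Ω,
        (MeasurableSet[⨆ n, natFilt X n] A ∧
            ∀ n : ℕ, MeasurableSet[natFilt X n] (A ∩ {ω | S ω ≤ (n : ℕ∞)})) ↔
          (MeasurableSet[⨆ n, natFilt Y n] A ∧
            ∀ n : ℕ, MeasurableSet[natFilt Y n] (A ∩ {ω | S ω ≤ (n : ℕ∞)}))) := by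
  have hSX : IsStoppingTime (natFiltration X) S := hS
  have hstop : stoppedProcess X S = stoppedProcess Y S := by
    simpa only [stopped_eq_stoppedProcess] using funext₂ hXY
  have hSY : IsStoppingTime (natFiltration Y) S :=
    IsStoppingTime.of_natFiltration_stoppedProcess (hstop ▸ hSX.natFiltration_stoppedProcess)
  exact ⟨hSY, fun A => ⟨fun hA => hSX.measurableSpace_le_of_stoppedProcess_eq hSY hstop A hA,
    fun hA => hSY.measurableSpace_le_of_stoppedProcess_eq hSX hstop.symm A hA⟩⟩
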